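/- In the path P_n, let S be a minimal perfect critical vertex set whose complement S̄ = {v_{i_1}, …, v_{i_k}} (k ≥ 1) is isolated, with 1 < i_1 and i_k < n. Setting m = i_1 − 1 (the size of the first segment), the number 2m + 1 is an odd prime. -/

import Mathlib

/-- The Laplacian matrix (degree matrix minus adjacency matrix) of the path graph `P_n`
on vertices `v_1, …, v_n`, where `v_i` and `v_j` are adjacent iff `|i - j| = 1`.
The vertex `v_r` corresponds to the index `⟨r - 1, _⟩ : Fin n`. -/
def pathLap (n : ℕ) : Matrix (Fin n) (Fin n) ℝ :=
  Matrix.of fun i j =>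
    if i = j then ((if (i : ℕ) = 0 then 0 else 1) + (if (i : ℕ) + 1 = n then 0 else 1))
    else if (i : ℕ) + 1 = (j : ℕ) ∨ (j : ℕ) + 1 = (i : ℕ) then -1 else 0

/-- `S` is a *perfect critical vertex set* (PCVS) of the path `P_n`: `S` is nonempty and
some eigenvector `y` of the Laplacian of `P_n` vanishes at every vertex outside `S`
and is nonzero at every vertex of `S`. -/
def IsPathPCVS (n : ℕ) (S : Set (Fin n)) : Prop :=
  S.Nonempty ∧ ∃ (lam : ℝ) (y : Fin n → ℝ), y ≠ 0 ∧ (pathLap n).mulVec y = lam • y ∧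
    (∀ v : Fin n, v ∉ S → y v = 0) ∧ ∀ v : Fin n, v ∈ S → y v ≠ 0

/-- `S` is a *minimal perfect critical vertex set* (MPCVS) of the path `P_n`:
`S` is a PCVS and no proper (nonempty) subset of `S` is a PCVS. -/
def IsPathMPCVS (n : ℕ) (S : Set (Fin n)) : Prop :=
  IsPathPCVS n S ∧ ∀ T : Set (Fin n), T ⊂ S → ¬ IsPathPCVS n T

section Aux
open Real Finset

noncomputable def cheb (x : ℝ) : ℕ → ℝ
  | 0 => 1
  | 1 => x - 1
  | (i+2) => x * cheb x (i+1) - cheb x i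

lemma cheb_ge (x : ℝ) (hx : 2 ≤ x) : ∀ i, 1 ≤ cheb x i ∧ cheb x i ≤ cheb x (i+1) := by
  intro i
  induction i using Nat.twoStepInduction with
  | zero => refine ⟨by simp [cheb], by simp [cheb]; linarith⟩
  | one =>
      refine ⟨by simp [cheb]; linarith, ?_⟩
      have e : cheb x 2 = x * (x - 1) - 1 := by
        show x * cheb x 1 - cheb x 0 = _
        simp [cheb]
      show cheb x 1 ≤ cheb x 2
      rw [e]
      show x - 1 ≤ _
      nlinarith
  | more i ih1 ih2 =>
      obtain ⟨h1, h2⟩ := ih1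
      obtain ⟨h3, h4⟩ := ih2
      refine ⟨by linarith, ?_⟩
      show cheb x (i+2) ≤ x * cheb x (i+2) - cheb x (i+1)
      nlinarith

lemma cheb_neg (x : ℝ) (hx : x ≤ -2) :
    ∀ i, 1 ≤ (-1)^i * cheb x i ∧ (-1)^i * cheb x i ≤ (-1)^(i+1) * cheb x (i+1) := by
  intro i
  induction i using Nat.twoStepInduction with
  | zero => refine ⟨by simp [cheb], by simp [cheb]; linarith⟩
  | one =>
      refine ⟨by simp [cheb]; linarith, ?_⟩
      have e : cheb x 2 = x * (x - 1) - 1 := by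
        show x * cheb x 1 - cheb x 0 = _
        simp [cheb]
      show (-1:ℝ)^1 * cheb x 1 ≤ (-1:ℝ)^2 * cheb x 2
      rw [e]
      show (-1:ℝ)^1 * (x - 1) ≤ _
      norm_num
      nlinarith
  | more i ih1 ih2 =>
      obtain ⟨h3, h4⟩ := ih2
      have h4' : (-1:ℝ)^(i+1) * cheb x (i+1) ≤ (-1)^(i+2) * cheb x (i+2) := h4
      have e : cheb x (i+3) = x * cheb x (i+2) - cheb x (i+1) := rfl
      have e2 : (-1:ℝ)^(i+3) = -((-1)^(i+2)) := by ring
      have e3 : (-1:ℝ)^(i+1) = -((-1)^(i+2)) := by ring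
      rw [e3] at h3 h4'
      have hD2 : (1:ℝ) ≤ (-1)^(i+2) * cheb x (i+2) := le_trans h3 h4'
      constructor
      · exact le_trans h3 h4'
      · show (-1:ℝ)^(i+2) * cheb x (i+2) ≤ (-1)^(i+3) * cheb x (i+3)
        rw [e, e2]
        have hprod : 0 ≤ (-x-2) * ((-1)^(i+2) * cheb x (i+2)) :=
          mul_nonneg (by linarith) (by linarith)
        nlinarith [hprod, h4', hD2]

lemma cheb_cos (θ : ℝ) : ∀ i : ℕ, cheb (2 * cos θ) i * cos (θ/2) = cos ((2*(i:ℝ)+1) * (θ/2)) := by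
  intro i
  induction i using Nat.twoStepInduction with
  | zero => norm_num [cheb]
  | one =>
      have h := cos_add_cos ((3:ℝ) * (θ/2)) (θ/2)
      rw [show ((3:ℝ)*(θ/2) + θ/2)/2 = θ by ring, show ((3:ℝ)*(θ/2) - θ/2)/2 = θ/2 by ring] at h
      have hg : cos ((2*((1:ℕ):ℝ)+1) * (θ/2)) = cos (3 * (θ/2)) := by norm_num
      rw [hg]
      show (2 * cos θ - 1) * cos (θ/2) = _
      linarith
  | more i ih1 ih2 =>
      have h := cos_add_cos ((2*(i:ℝ)+5) * (θ/2)) ((2*(i:ℝ)+1) * (θ/2))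
      rw [show ((2*(i:ℝ)+5) * (θ/2) + (2*(i:ℝ)+1) * (θ/2))/2 = (2*(i:ℝ)+3) * (θ/2) by ring,
          show ((2*(i:ℝ)+5) * (θ/2) - (2*(i:ℝ)+1) * (θ/2))/2 = θ by ring] at h
      have e : cheb (2*cos θ) (i+2) = 2*cos θ * cheb (2*cos θ) (i+1) - cheb (2*cos θ) i := rfl
      have ih2' : cheb (2*cos θ) (i+1) * cos (θ/2) = cos ((2*(i:ℝ)+3) * (θ/2)) := by
        rw [ih2]; congr 1; push_cast; ring
      have hg : cos ((2*(((i+2):ℕ):ℝ)+1) * (θ/2)) = cos ((2*(i:ℝ)+5) * (θ/2)) := by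
        congr 1; push_cast; ring
      rw [e, hg]
      calc (2*cos θ * cheb (2*cos θ) (i+1) - cheb (2*cos θ) i) * cos (θ/2)
          = 2*cos θ * (cheb (2*cos θ) (i+1) * cos (θ/2)) - cheb (2*cos θ) i * cos (θ/2) := by ring
        _ = 2*cos θ * cos ((2*(i:ℝ)+3) * (θ/2)) - cos ((2*(i:ℝ)+1)*(θ/2)) := by rw [ih2', ih1]
        _ = cos ((2*(i:ℝ)+5) * (θ/2)) := by linarith

lemma pathLap_mulVec (n : ℕ) (y : Fin n → ℝ) (z : ℕ → ℝ)
    (hz : ∀ p : Fin n, z p = y p) (hz0 : ∀ p, n ≤ p → z p = 0)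
    (p : ℕ) (hp : p < n) :
    (pathLap n).mulVec y ⟨p, hp⟩ =
      ((if p = 0 then 0 else 1) + (if p + 1 = n then 0 else 1)) * z p
        - (if p = 0 then 0 else z (p-1)) - z (p+1) := by
  set D : ℝ := (if p = 0 then (0:ℝ) else 1) + (if p + 1 = n then 0 else 1) with hD
  set g : ℕ → ℝ := fun q =>
    (if q = p then D * z q else 0) + (if q = p + 1 then -z q else 0)
      + (if q = p - 1 ∧ p ≠ 0 then -z q else 0) with hg
  have key : ∀ (q : ℕ) (hq : q < n), pathLap n ⟨p, hp⟩ ⟨q, hq⟩ * z q = g q := by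
    intro q hq
    simp only [hg, hD, pathLap, Matrix.of_apply, Fin.mk.injEq]
    split_ifs <;> first | (exfalso; omega) | ring
  have hmv : (pathLap n).mulVec y ⟨p, hp⟩ = ∑ q ∈ range n, g q := by
    rw [Matrix.mulVec, dotProduct]
    rw [show (∑ j, pathLap n ⟨p, hp⟩ j * y j) = ∑ j : Fin n, g ↑j from
      Finset.sum_congr rfl fun j _ => by
        rw [← hz j, ← key j j.isLt]]
    exact Fin.sum_univ_eq_sum_range g n
  rw [hmv, hg]
  rw [Finset.sum_add_distrib, Finset.sum_add_distrib]
  rw [Finset.sum_ite_eq' (range n) p (fun q => D * z q)]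
  rw [Finset.sum_ite_eq' (range n) (p+1) (fun q => -z q)]
  rw [if_pos (Finset.mem_range.2 hp)]
  have h2 : (if p + 1 ∈ range n then -z (p+1) else 0) = -z (p+1) := by
    by_cases h : p + 1 < n
    · rw [if_pos (Finset.mem_range.2 h)]
    · rw [if_neg (by simp [Finset.mem_range]; omega), hz0 (p+1) (by omega)]
      ring
  rw [h2]
  by_cases hp0 : p = 0
  · have : (∑ q ∈ range n, if q = p - 1 ∧ p ≠ 0 then -z q else 0) = 0 := by
      apply Finset.sum_eq_zero; intro q hq; rw [if_neg (by simp [hp0])]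
    rw [this, if_pos hp0]
    ring
  · have : (∑ q ∈ range n, if q = p - 1 ∧ p ≠ 0 then -z q else 0)
        = ∑ q ∈ range n, if q = p - 1 then -z q else 0 := by
      apply Finset.sum_congr rfl; intro q hq
      by_cases h : q = p - 1
      · rw [if_pos ⟨h, hp0⟩, if_pos h]
      · rw [if_neg (by tauto), if_neg h]
    rw [this, Finset.sum_ite_eq' (range n) (p-1) (fun q => -z q),
        if_pos (Finset.mem_range.2 (by omega))]
    rw [if_neg hp0]
    ring

end Aux

set_option maxHeartbeats 1600000 in
/-- If `S` is a minimal perfect critical vertex set of the path `P_n` whose complement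
`S̄ = {v_{i_1}, …, v_{i_k}}` (`k ≥ 1`, `1 < i_1`, `i_k < n`) is isolated, and
`m = i_1 - 1` is the size of the first segment, then `2m + 1` is an odd prime. -/
theorem path_mpcvs_first_segment_prime
    (n k : ℕ) (idx : ℕ → ℕ) (hk : 1 ≤ k)
    (hfirst : 1 < idx 1) (hlast : idx k < n)
    (hiso : ∀ j, 1 ≤ j → j < k → idx j + 2 ≤ idx (j + 1))
    (S : Set (Fin n))
    (hS : ∀ v : Fin n, v ∈ S ↔ ¬ ∃ j, 1 ≤ j ∧ j ≤ k ∧ idx j = (v : ℕ) + 1)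
    (hmpcvs : IsPathMPCVS n S) :
    Nat.Prime (2 * (idx 1 - 1) + 1) ∧ Odd (2 * (idx 1 - 1) + 1) := by
  classical
  open Real in
  set m : ℕ := idx 1 - 1 with hmdef
  -- monotonicity of idx
  have hchain : ∀ i j, 1 ≤ i → i ≤ j → j ≤ k → idx i ≤ idx j := by
    intro i j h1 h2 h3
    induction j with
    | zero => omega
    | succ j ih =>
        rcases Nat.lt_or_ge i (j+1) with h | h
        · have hle := ih (by omega) (by omega)
          have := hiso j (by omega) (by omega)
          omega
        · have : i = j + 1 := by omega
          rw [this]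
  have h1k : idx 1 ≤ idx k := hchain 1 k le_rfl hk le_rfl
  have hn : 3 ≤ n := by omega
  have hm1 : 1 ≤ m := by omega
  have hmn : m < n := by omega
  obtain ⟨⟨hSne, lam, y, hy0, hEig, hout, hin⟩, hmin⟩ := hmpcvs
  -- the sequence of values
  set z : ℕ → ℝ := fun p => if h : p < n then y ⟨p, h⟩ else 0 with hzz
  have hzdef : ∀ v : Fin n, z ↑v = y v := by
    intro v
    simp only [hzz]
    rw [dif_pos v.isLt]
  have hz0 : ∀ p, n ≤ p → z p = 0 := by
    intro p hp
    simp only [hzz]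
    rw [dif_neg (by omega)]
  have eig : ∀ (p : ℕ) (hp : p < n),
      ((if p = 0 then (0:ℝ) else 1) + (if p + 1 = n then 0 else 1)) * z p
        - (if p = 0 then 0 else z (p-1)) - z (p+1) = lam * z p := by
    intro p hp
    have h1 := congrFun hEig ⟨p, hp⟩
    rw [pathLap_mulVec n y z hzdef hz0 p hp] at h1
    rw [h1, Pi.smul_apply, smul_eq_mul, ← hzdef ⟨p, hp⟩]
  set x : ℝ := 2 - lam with hxdef
  have R0 : z 1 = (1 - lam) * z 0 := by
    have h := eig 0 (by omega)
    rw [if_pos rfl, if_pos rfl, if_neg (show ¬(0 + 1 = n) by omega)] at h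
    linarith
  have Rmid : ∀ p, 1 ≤ p → p + 1 < n → z (p+1) = (2 - lam) * z p - z (p-1) := by
    intro p h1 h2
    have h := eig p (by omega)
    rw [if_neg (show ¬(p = 0) by omega), if_neg (show ¬(p + 1 = n) by omega),
        if_neg (show ¬(p = 0) by omega)] at h
    linarith
  have Rend : z (n-2) = (1 - lam) * z (n-1) := by
    have h := eig (n-1) (by omega)
    rw [if_neg (show ¬(n-1 = 0) by omega), if_pos (show n-1+1 = n by omega),
        if_neg (show ¬(n-1 = 0) by omega)] at h
    have hzn : z (n-1+1) = 0 := hz0 _ (by omega)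
    have e1 : n-1-1 = n-2 := by omega
    rw [e1, hzn] at h
    linarith
  have hchebz : ∀ p, p < n → z p = z 0 * cheb x p := by
    intro p
    induction p using Nat.twoStepInduction with
    | zero => intro _; simp [cheb]
    | one =>
        intro _
        show z 1 = z 0 * cheb x 1
        rw [R0]
        show _ = z 0 * (x - 1)
        rw [hxdef]; ring
    | more p ih1 ih2 =>
        intro hp2
        have e := Rmid (p+1) (by omega) (by omega)
        have e2 : p + 1 + 1 = p + 2 := by omega
        have e3 : p + 1 - 1 = p := by omega
        rw [e2, e3] at e
        rw [e, ih2 (by omega), ih1 (by omega)]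
        show _ = z 0 * (x * cheb x (p+1) - cheb x p)
        rw [hxdef]; ring
  -- membership facts
  have hmemS : ∀ (p : ℕ) (hp : p < n), p < m → (⟨p, hp⟩ : Fin n) ∈ S := by
    intro p hp hpm
    rw [hS]
    rintro ⟨j, hj1, hjk, hje⟩
    have := hchain 1 j le_rfl hj1 hjk
    simp only [Fin.val_mk] at hje
    omega
  have zsmall : ∀ p, p < m → z p ≠ 0 := by
    intro p hpm
    have hpn : p < n := by omega
    have hv := hin _ (hmemS p hpn hpm)
    exact fun h0 => hv ((hzdef ⟨p, hpn⟩).symm.trans h0)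
  have z0ne : z 0 ≠ 0 := zsmall 0 (by omega)
  have zlastne : z (n-1) ≠ 0 := by
    have hpn : n - 1 < n := by omega
    have hv : (⟨n-1, hpn⟩ : Fin n) ∈ S := by
      rw [hS]
      rintro ⟨j, hj1, hjk, hje⟩
      have := hchain j k hj1 hjk le_rfl
      simp only [Fin.val_mk] at hje
      omega
    exact fun h0 => hin _ hv ((hzdef ⟨n-1, hpn⟩).symm.trans h0)
  have zm : z m = 0 := by
    have hv : (⟨m, hmn⟩ : Fin n) ∉ S := by
      rw [hS]
      exact not_not_intro ⟨1, le_rfl, hk, by simp only [Fin.val_mk]; omega⟩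
    exact (hzdef ⟨m, hmn⟩).trans (hout _ hv)
  have chebm : cheb x m = 0 := by
    have h := hchebz m hmn
    rw [zm] at h
    rcases mul_eq_zero.mp h.symm with h' | h'
    · exact absurd h' z0ne
    · exact h'
  -- |x| < 2
  have hxlt : x < 2 := by
    by_contra h
    have := (cheb_ge x (by linarith) m).1
    rw [chebm] at this; linarith
  have hxgt : -2 < x := by
    by_contra h
    have := (cheb_neg x (by linarith) m).1
    rw [chebm, mul_zero] at this; linarith
  -- the angle
  set th : ℝ := Real.arccos (x/2) with hthdef
  have hcosth : Real.cos th = x / 2 := Real.cos_arccos (by linarith) (by linarith)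
  have hthpos : 0 < th := Real.arccos_pos.2 (by linarith)
  have hpi := Real.pi_pos
  have hthlt : th < Real.pi := by
    rcases lt_or_eq_of_le (Real.arccos_le_pi (x/2)) with h | h
    · exact h
    · exfalso; have := Real.arccos_eq_pi.mp h; linarith
  have hx2 : x = 2 * Real.cos th := by rw [hcosth]; ring
  have hcoshalf : 0 < Real.cos (th/2) :=
    Real.cos_pos_of_mem_Ioo ⟨by linarith, by linarith⟩
  have hsinhalf : 0 < Real.sin (th/2) :=
    Real.sin_pos_of_pos_of_lt_pi (by linarith) (by linarith)
  have hzcos : ∀ p, p < n → z p * Real.cos (th/2) = z 0 * Real.cos ((2*(p:ℝ)+1) * (th/2)) := by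
    intro p hp
    have hc := cheb_cos th p
    rw [hchebz p hp, hx2, mul_assoc, hc]
  have zeroiff : ∀ p, p < n → (z p = 0 ↔ Real.cos ((2*(p:ℝ)+1) * (th/2)) = 0) := by
    intro p hp
    have h := hzcos p hp
    constructor
    · intro h0
      rw [h0, zero_mul] at h
      rcases mul_eq_zero.mp h.symm with h' | h'
      · exact absurd h' z0ne
      · exact h'
    · intro h0
      rw [h0, mul_zero] at h
      rcases mul_eq_zero.mp h with h' | h'
      · exact h'
      · linarith
  -- boundary condition forces sin (n*th) = 0
  have hc1 : ((n-1:ℕ):ℝ) = (n:ℝ) - 1 := by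
    rw [Nat.cast_sub (by omega : 1 ≤ n)]; norm_num
  have hc2 : ((n-2:ℕ):ℝ) = (n:ℝ) - 2 := by
    rw [Nat.cast_sub (by omega : 2 ≤ n)]; norm_num
  have hsinnth : Real.sin ((n:ℝ) * th) = 0 := by
    have e1 : z (n-1) * Real.cos (th/2) = z 0 * Real.cos ((2*(n:ℝ)-1) * (th/2)) := by
      have h := hzcos (n-1) (by omega)
      rw [hc1, show (2*((n:ℝ)-1)+1) = 2*(n:ℝ)-1 by ring] at h
      exact h
    have e2 : z (n-2) * Real.cos (th/2) = z 0 * Real.cos ((2*(n:ℝ)-3) * (th/2)) := by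
      have h := hzcos (n-2) (by omega)
      rw [hc2, show (2*((n:ℝ)-2)+1) = 2*(n:ℝ)-3 by ring] at h
      exact h
    have hRe : z (n-2) = (2*Real.cos th - 1) * z (n-1) := by
      rw [Rend, ← hx2]
      have : x - 1 = 1 - lam := by rw [hxdef]; ring
      rw [this]
    have star : Real.cos ((2*(n:ℝ)-3) * (th/2))
        = (2*Real.cos th - 1) * Real.cos ((2*(n:ℝ)-1) * (th/2)) := by
      apply mul_left_cancel₀ z0ne
      calc z 0 * Real.cos ((2*(n:ℝ)-3) * (th/2)) = z (n-2) * Real.cos (th/2) := e2.symm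
        _ = (2*Real.cos th - 1) * (z (n-1) * Real.cos (th/2)) := by rw [hRe]; ring
        _ = (2*Real.cos th - 1) * (z 0 * Real.cos ((2*(n:ℝ)-1) * (th/2))) := by rw [e1]
        _ = z 0 * ((2*Real.cos th - 1) * Real.cos ((2*(n:ℝ)-1) * (th/2))) := by ring
    have hadd := Real.cos_add_cos ((2*(n:ℝ)+1) * (th/2)) ((2*(n:ℝ)-3) * (th/2))
    rw [show ((2*(n:ℝ)+1) * (th/2) + (2*(n:ℝ)-3) * (th/2))/2 = (2*(n:ℝ)-1) * (th/2) by ring,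
        show ((2*(n:ℝ)+1) * (th/2) - (2*(n:ℝ)-3) * (th/2))/2 = th by ring] at hadd
    have hsub := Real.cos_sub_cos ((2*(n:ℝ)+1) * (th/2)) ((2*(n:ℝ)-1) * (th/2))
    rw [show ((2*(n:ℝ)+1) * (th/2) + (2*(n:ℝ)-1) * (th/2))/2 = (n:ℝ) * th by ring,
        show ((2*(n:ℝ)+1) * (th/2) - (2*(n:ℝ)-1) * (th/2))/2 = th/2 by ring] at hsub
    have hzero : Real.sin ((n:ℝ)*th) * Real.sin (th/2) = 0 := by linarith [hadd, hsub, star]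
    rcases mul_eq_zero.mp hzero with h' | h'
    · exact h'
    · linarith
  -- n * th is an integer multiple of pi
  obtain ⟨t, ht⟩ := Real.sin_eq_zero_iff.mp hsinnth
  have htpos : 1 ≤ t := by
    by_contra h
    push_neg at h
    have h1 : (t:ℝ) ≤ 0 := by exact_mod_cast (by omega : t ≤ 0)
    have h2 : (0:ℝ) < (n:ℝ) * th := by
      apply mul_pos _ hthpos
      exact_mod_cast (by omega : 0 < n)
    nlinarith [ht]
  set t' : ℕ := t.toNat with ht'def
  have htt' : (t' : ℝ) = (t : ℝ) := by
    have : (t' : ℤ) = t := Int.toNat_of_nonneg (by omega)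
    exact_mod_cast this
  have ht'1 : 1 ≤ t' := by omega
  have hnth : (n:ℝ) * th = (t':ℝ) * Real.pi := by rw [htt', ht]
  have hnR : ((n:ℝ)) ≠ 0 := Nat.cast_ne_zero.2 (by omega)
  -- characterization of zeros
  have zf : ∀ p, p < n → z p = 0 → ∃ s : ℕ, (2*p+1) * t' = (2*s+1) * n := by
    intro p hp h0
    obtain ⟨kk, hkk⟩ := Real.cos_eq_zero_iff.mp ((zeroiff p hp).mp h0)
    have hR : (2*(p:ℝ)+1) * (t':ℝ) * Real.pi = (2*(kk:ℝ)+1) * (n:ℝ) * Real.pi := by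
      calc (2*(p:ℝ)+1) * (t':ℝ) * Real.pi = (2*(p:ℝ)+1) * ((t':ℝ) * Real.pi) := by ring
        _ = (2*(p:ℝ)+1) * ((n:ℝ) * th) := by rw [hnth]
        _ = (2*(n:ℝ)) * ((2*(p:ℝ)+1) * (th/2)) := by ring
        _ = (2*(n:ℝ)) * ((2*(kk:ℝ)+1) * Real.pi / 2) := by rw [hkk]
        _ = (2*(kk:ℝ)+1) * (n:ℝ) * Real.pi := by ring
    have hZR : (2*(p:ℝ)+1) * (t':ℝ) = (2*(kk:ℝ)+1) * (n:ℝ) :=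
      mul_right_cancel₀ Real.pi_ne_zero hR
    have hZ : (2*(p:ℤ)+1) * (t':ℤ) = (2*kk+1) * (n:ℤ) := by exact_mod_cast hZR
    have hkk0 : 0 ≤ kk := by
      by_contra hneg
      push_neg at hneg
      have h1 : (2*kk+1) * (n:ℤ) ≤ -(n:ℤ) := by nlinarith [(by omega : (3:ℤ) ≤ (n:ℤ))]
      have h2 : (1:ℤ) ≤ (2*(p:ℤ)+1) * (t':ℤ) := by
        have : (1:ℤ) ≤ (t':ℤ) := by omega
        nlinarith [(by omega : (0:ℤ) ≤ (p:ℤ))]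
      omega
    refine ⟨kk.toNat, ?_⟩
    have hkk' : ((kk.toNat : ℕ) : ℤ) = kk := Int.toNat_of_nonneg hkk0
    have : ((2*p+1) * t' : ℤ) = ((2*kk.toNat+1) * n : ℤ) := by
      push_cast [hkk']
      push_cast at hZ
      linarith [hZ]
    exact_mod_cast this
  have zb : ∀ p, p < n → ∀ s : ℕ, (2*p+1) * t' = (2*s+1) * n → z p = 0 := by
    intro p hp s hs
    rw [zeroiff p hp, Real.cos_eq_zero_iff]
    refine ⟨(s:ℤ), ?_⟩
    have hsR : (2*(p:ℝ)+1) * (t':ℝ) = (2*(s:ℝ)+1) * (n:ℝ) := by exact_mod_cast hs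
    have key : (2*(p:ℝ)+1) * (th/2) * (n:ℝ) = (2*((s:ℤ):ℝ)+1) * Real.pi / 2 * (n:ℝ) := by
      push_cast
      calc (2*(p:ℝ)+1) * (th/2) * (n:ℝ) = (2*(p:ℝ)+1) * ((n:ℝ) * th) / 2 := by ring
        _ = (2*(p:ℝ)+1) * ((t':ℝ) * Real.pi) / 2 := by rw [hnth]
        _ = ((2*(p:ℝ)+1) * (t':ℝ)) * Real.pi / 2 := by ring
        _ = ((2*(s:ℝ)+1) * (n:ℝ)) * Real.pi / 2 := by rw [hsR]
        _ = (2*(s:ℝ)+1) * Real.pi / 2 * (n:ℝ) := by ring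
    exact mul_right_cancel₀ hnR key
  -- the key equation at position m
  obtain ⟨s₀, hNt⟩ := zf m hmn zm
  -- coprimality
  have hcop : Nat.gcd (2*m+1) (2*s₀+1) = 1 := by
    by_contra hg
    have hg1 : Nat.gcd (2*m+1) (2*s₀+1) ∣ 2*m+1 := Nat.gcd_dvd_left _ _
    have hg2 : Nat.gcd (2*m+1) (2*s₀+1) ∣ 2*s₀+1 := Nat.gcd_dvd_right _ _
    set g := Nat.gcd (2*m+1) (2*s₀+1) with hgdef
    obtain ⟨N₁, hN1⟩ := hg1
    obtain ⟨w, hw⟩ := hg2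
    have hgpos : 0 < g := Nat.pos_of_dvd_of_pos (Nat.gcd_dvd_left _ _) (by omega)
    have hgodd : g % 2 = 1 := by
      rcases Nat.even_or_odd g with he | ho
      · exfalso
        obtain ⟨c, hc⟩ := he
        exact absurd (⟨c*N₁, by rw [hN1, hc]; ring⟩ : 2 ∣ 2*m+1) (by omega)
      · exact Nat.odd_iff.mp ho
    have hN1odd : N₁ % 2 = 1 := by
      have hmm := Nat.mul_mod g N₁ 2
      rw [← hN1, hgodd, one_mul] at hmm
      omega
    have hwodd : w % 2 = 1 := by
      have hmm := Nat.mul_mod g w 2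
      rw [← hw, hgodd, one_mul] at hmm
      omega
    have hg3 : 3 ≤ g := by omega
    have hN1pos : 1 ≤ N₁ := by
      rcases Nat.eq_zero_or_pos N₁ with h | h
      · rw [h, mul_zero] at hN1; omega
      · omega
    have hN1lt : N₁ < 2*m+1 := by
      have h3n : 3*N₁ ≤ g*N₁ := Nat.mul_le_mul_right _ hg3
      rw [← hN1] at h3n
      omega
    have heqg : g * (N₁ * t') = g * (w * n) := by
      rw [← mul_assoc, ← hN1, hNt, hw, mul_assoc]
    have heq2 : N₁ * t' = w * n := Nat.eq_of_mul_eq_mul_left hgpos heqg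
    have hp1 : (N₁ - 1)/2 < m := by omega
    have hz1 : z ((N₁-1)/2) = 0 := by
      apply zb _ (by omega) ((w-1)/2)
      rw [show 2*((N₁-1)/2)+1 = N₁ by omega, show 2*((w-1)/2)+1 = w by omega]
      exact heq2
    exact zsmall _ hp1 hz1
  have hNdvdn : (2*m+1) ∣ n := by
    apply Nat.Coprime.dvd_of_dvd_mul_left (Nat.coprime_iff_gcd_eq_one.mpr hcop)
    exact ⟨t', hNt.symm⟩
  have NdvdP : ∀ p, p < n → z p = 0 → (2*m+1) ∣ (2*p+1) := by
    intro p hp h0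
    obtain ⟨s, hs⟩ := zf p hp h0
    have hmul : ((2*p+1)*(2*s₀+1)) * t' = ((2*s+1)*(2*m+1)) * t' := by
      calc ((2*p+1)*(2*s₀+1))*t' = (2*s₀+1) * ((2*p+1)*t') := by ring
        _ = (2*s₀+1) * ((2*s+1)*n) := by rw [hs]
        _ = (2*s+1) * ((2*s₀+1)*n) := by ring
        _ = (2*s+1) * ((2*m+1)*t') := by rw [hNt]
        _ = ((2*s+1)*(2*m+1))*t' := by ring
    have heq : (2*p+1)*(2*s₀+1) = (2*s+1)*(2*m+1) := Nat.eq_of_mul_eq_mul_right (by omega) hmul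
    have hdvd : (2*m+1) ∣ (2*p+1)*(2*s₀+1) := ⟨2*s+1, by rw [heq]; ring⟩
    exact Nat.Coprime.dvd_of_dvd_mul_right (Nat.coprime_iff_gcd_eq_one.mpr hcop) hdvd
  constructor
  · rw [Nat.prime_def]
    refine ⟨by omega, fun a ha => ?_⟩
    by_contra hcon
    push_neg at hcon
    obtain ⟨ha1, haN⟩ := hcon
    obtain ⟨b, hb⟩ := ha
    have hapos : 1 ≤ a := by
      rcases Nat.eq_zero_or_pos a with h | h
      · rw [h, zero_mul] at hb; omega
      · omega
    have haodd : a % 2 = 1 := by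
      rcases Nat.even_or_odd a with he | ho
      · exfalso
        obtain ⟨c, hc⟩ := he
        exact absurd (⟨c*b, by rw [hb, hc]; ring⟩ : 2 ∣ 2*m+1) (by omega)
      · exact Nat.odd_iff.mp ho
    have ha3 : 3 ≤ a := by omega
    have haltN : a < 2*m+1 := lt_of_le_of_ne (Nat.le_of_dvd (by omega) ⟨b, hb⟩) haN
    have hadvdn : a ∣ n := dvd_trans ⟨b, hb⟩ hNdvdn
    obtain ⟨c, hcn⟩ := hadvdn
    have haR : ((a:ℝ)) ≠ 0 := Nat.cast_ne_zero.2 (by omega)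
    set ph : ℝ := Real.pi / a with hphdef
    set w : Fin n → ℝ := fun v => Real.cos ((2*((v:ℕ):ℝ)+1) * (ph/2)) with hwdef
    set zw : ℕ → ℝ := fun p => if p < n then Real.cos ((2*(p:ℝ)+1) * (ph/2)) else 0 with hzwdef
    have hzw : ∀ v : Fin n, zw ↑v = w v := by
      intro v; simp only [hzwdef, hwdef]; rw [if_pos v.isLt]
    have hzw0 : ∀ p, n ≤ p → zw p = 0 := by
      intro p hp; simp only [hzwdef]; rw [if_neg (by omega)]
    have hzwlt : ∀ p, p < n → zw p = Real.cos ((2*(p:ℝ)+1) * (ph/2)) := by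
      intro p hp; simp only [hzwdef]; rw [if_pos hp]
    have hsinph : Real.sin ((n:ℝ) * ph) = 0 := by
      have he : (n:ℝ) * ph = (c:ℝ) * Real.pi := by
        rw [hphdef, hcn]
        push_cast
        field_simp
      rw [he]
      exact_mod_cast Real.sin_nat_mul_pi c
    have tri : ∀ u : ℝ, Real.cos (u - ph) + Real.cos (u + ph) = 2 * Real.cos ph * Real.cos u := by
      intro u
      have h := Real.cos_add_cos (u + ph) (u - ph)
      rw [show (u + ph + (u - ph))/2 = u by ring, show (u + ph - (u - ph))/2 = ph by ring] at h
      linarith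
    have heigw : (pathLap n).mulVec w = (2 - 2*Real.cos ph) • w := by
      funext v
      obtain ⟨p, hp⟩ := v
      have hr : ((2 - 2*Real.cos ph) • w) ⟨p, hp⟩ = (2 - 2*Real.cos ph) * zw p := by
        rw [Pi.smul_apply, smul_eq_mul]
        congr 1
        exact (hzw ⟨p, hp⟩).symm
      rw [pathLap_mulVec n w zw hzw hzw0 p hp, hr]
      rcases Nat.eq_zero_or_pos p with rfl | hppos
      · rw [if_pos rfl, if_pos rfl, if_neg (show ¬(0+1 = n) by omega)]
        rw [hzwlt 0 (by omega), hzwlt (0+1) (by omega)]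
        have h := tri (ph/2)
        rw [show ph/2 - ph = -(ph/2) by ring, Real.cos_neg,
            show ph/2 + ph = 3*(ph/2) by ring] at h
        rw [show (2*((0:ℕ):ℝ)+1) * (ph/2) = ph/2 by push_cast; ring,
            show (2*(((0+1):ℕ):ℝ)+1) * (ph/2) = 3*(ph/2) by push_cast; ring]
        linarith
      rcases Nat.lt_or_ge (p+1) n with hpn | hpn
      · rw [if_neg (by omega), if_neg (by omega), if_neg (by omega)]
        rw [hzwlt p hp, hzwlt (p+1) (by omega), hzwlt (p-1) (by omega)]
        have h := tri ((2*(p:ℝ)+1) * (ph/2))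
        rw [show (2*(p:ℝ)+1) * (ph/2) - ph = (2*(p:ℝ)-1) * (ph/2) by ring,
            show (2*(p:ℝ)+1) * (ph/2) + ph = (2*(p:ℝ)+3) * (ph/2) by ring] at h
        have c1 : ((p-1:ℕ):ℝ) = (p:ℝ) - 1 := by
          rw [Nat.cast_sub (by omega : 1 ≤ p)]; norm_num
        rw [show (2*(((p+1):ℕ):ℝ)+1) * (ph/2) = (2*(p:ℝ)+3) * (ph/2) by push_cast; ring]
        rw [c1, show (2*((p:ℝ)-1)+1) * (ph/2) = (2*(p:ℝ)-1) * (ph/2) by ring]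
        linarith
      · have hpe : p = n-1 := by omega
        subst hpe
        rw [if_neg (by omega), if_pos (show (n-1)+1 = n by omega), if_neg (by omega)]
        rw [hzw0 ((n-1)+1) (by omega)]
        have e11 : (n-1)-1 = n-2 := by omega
        rw [hzwlt (n-1) (by omega), e11, hzwlt (n-2) (by omega)]
        rw [hc1, hc2]
        rw [show (2*((n:ℝ)-1)+1) * (ph/2) = (2*(n:ℝ)-1) * (ph/2) by ring,
            show (2*((n:ℝ)-2)+1) * (ph/2) = (2*(n:ℝ)-3) * (ph/2) by ring]
        have hadd := tri ((2*(n:ℝ)-1) * (ph/2))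
        rw [show (2*(n:ℝ)-1) * (ph/2) - ph = (2*(n:ℝ)-3) * (ph/2) by ring,
            show (2*(n:ℝ)-1) * (ph/2) + ph = (2*(n:ℝ)+1) * (ph/2) by ring] at hadd
        have hsub := Real.cos_sub_cos ((2*(n:ℝ)+1) * (ph/2)) ((2*(n:ℝ)-1) * (ph/2))
        rw [show ((2*(n:ℝ)+1) * (ph/2) + (2*(n:ℝ)-1) * (ph/2))/2 = (n:ℝ) * ph by ring,
            show ((2*(n:ℝ)+1) * (ph/2) - (2*(n:ℝ)-1) * (ph/2))/2 = ph/2 by ring,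
            hsinph] at hsub
        linarith [hadd, hsub]
    have wzero : ∀ p : ℕ, (Real.cos ((2*(p:ℝ)+1) * (ph/2)) = 0 ↔ a ∣ (2*p+1)) := by
      intro p
      constructor
      · intro h0
        obtain ⟨kk, hkk⟩ := Real.cos_eq_zero_iff.mp h0
        have hR : (2*(p:ℝ)+1) * Real.pi = ((2*(kk:ℝ)+1) * (a:ℝ)) * Real.pi := by
          calc (2*(p:ℝ)+1) * Real.pi = (2*(a:ℝ)) * ((2*(p:ℝ)+1) * (ph/2)) := by
                rw [hphdef]; field_simp
            _ = (2*(a:ℝ)) * ((2*(kk:ℝ)+1) * Real.pi / 2) := by rw [hkk]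
            _ = ((2*(kk:ℝ)+1) * (a:ℝ)) * Real.pi := by ring
        have hZ : (2*(p:ℤ)+1) = (2*kk+1) * (a:ℤ) := by
          exact_mod_cast mul_right_cancel₀ Real.pi_ne_zero hR
        have hdz : (a:ℤ) ∣ (2*(p:ℤ)+1) := ⟨2*kk+1, by rw [hZ]; ring⟩
        exact_mod_cast hdz
      · intro hd
        obtain ⟨e, he⟩ := hd
        have heodd : e % 2 = 1 := by
          have hmm := Nat.mul_mod a e 2
          rw [← he, haodd, one_mul] at hmm
          omega
        rw [Real.cos_eq_zero_iff]
        refine ⟨(((e-1)/2 : ℕ) : ℤ), ?_⟩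
        have hcast : (2*(((((e-1)/2 : ℕ) : ℤ)):ℝ)+1) = (e:ℝ) := by
          exact_mod_cast (show 2*((e-1)/2)+1 = e by omega)
        have heR : (2*(p:ℝ)+1) = (a:ℝ) * (e:ℝ) := by exact_mod_cast he
        rw [hcast, heR, hphdef]
        field_simp
    set T : Set (Fin n) := {v : Fin n | ¬ a ∣ (2*(v:ℕ)+1)} with hTdef
    have hTiff : ∀ v : Fin n, v ∈ T ↔ w v ≠ 0 := by
      intro v
      have := (wzero (v:ℕ)).symm
      constructor
      · intro hv hw0
        exact hv ((wzero (v:ℕ)).mp hw0)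
      · intro hw0 hdvd
        exact hw0 ((wzero (v:ℕ)).mpr hdvd)
    have hTsub : T ⊆ S := by
      intro v hv
      by_contra hvS
      have h0 : y v = 0 := hout v hvS
      have hz0v : z ↑v = 0 := (hzdef v).trans h0
      have hNd : (2*m+1) ∣ (2*(v:ℕ)+1) := NdvdP ↑v v.isLt hz0v
      exact hv (dvd_trans ⟨b, hb⟩ hNd)
    set p₀ : ℕ := (a-1)/2 with hp0def
    have hp0a : 2*p₀+1 = a := by omega
    have hp0m : p₀ < m := by omega
    have hv0 : (⟨p₀, (by omega : p₀ < n)⟩ : Fin n) ∈ S := hmemS p₀ (by omega) hp0m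
    have hv0T : (⟨p₀, (by omega : p₀ < n)⟩ : Fin n) ∉ T := by
      intro hvT
      apply hvT
      show a ∣ 2*p₀+1
      rw [hp0a]
    have hTS : T ⊂ S := by
      refine HasSubset.Subset.ssubset_of_ne hTsub ?_
      intro he
      apply hv0T
      rw [he]
      exact hv0
    have hv00 : (⟨0, (by omega : 0 < n)⟩ : Fin n) ∈ T := by
      show ¬ a ∣ 2*0+1
      intro h
      have := Nat.le_of_dvd (by omega) h
      omega
    have hw0ne : w (⟨0, (by omega : 0 < n)⟩ : Fin n) ≠ 0 := (hTiff _).mp hv00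
    have hwne : w ≠ 0 := fun h => hw0ne (congrFun h _)
    have hPC : IsPathPCVS n T := by
      refine ⟨⟨_, hv00⟩, 2 - 2*Real.cos ph, w, hwne, heigw, ?_, ?_⟩
      · intro v hv
        by_contra hne
        exact hv ((hTiff v).mpr hne)
      · intro v hv
        exact (hTiff v).mp hv
    exact hmin T hTS hPC
  · exact ⟨m, by ring⟩
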